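/- arXiv:2306.12575 — 2 statements merged into one kernel-verified Lean document; each statement's English description precedes it below -/
import Mathlib

section
/- Let $T$ be a tree rooted at a single initially burning vertex $u$ with neighbours $v_1,\dots,v_{\deg(u)}$, and let $S_{v_i}$ denote the number of vertices of the component of $T - u$ containing $v_i$. In the path-restricted firefighter game with $b$ firefighters (any distance bound $d \geq 1$), the maximum number of vertices the firefighters can save equals the sum of the $\min(b, \deg(u))$ largest values among $S_{v_1},\dots,S_{v_{\deg(u)}}$. -/
open SimpleGraph Finset
open scoped Classical

namespace FF

variable {V : Type*} [Fintype V] [DecidableEq V]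

/-- One step of fire spread: the fire spreads to every undefended neighbour of a burnt vertex. -/
noncomputable def spread (G : SimpleGraph V) (D B : Finset V) : Finset V :=
  B ∪ Finset.univ.filter (fun v => v ∉ D ∧ ∃ u ∈ B, G.Adj u v)

/-- Cumulative defended set of a classic strategy. -/
noncomputable def cumDef (σ : ℕ → Finset V) (t : ℕ) : Finset V :=
  (Finset.range (t + 1)).biUnion σ

/-- Burnt set at time `t` in the classic game. -/
noncomputable def burnt (G : SimpleGraph V) (F : Finset V) (σ : ℕ → Finset V) : ℕ → Finset V
  | 0 => F
  | t + 1 => spread G (cumDef σ t) (burnt G F σ t)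

/-- A classic strategy is valid for `b` firefighters. -/
def ValidClassic (G : SimpleGraph V) (F : Finset V) (b : ℕ) (σ : ℕ → Finset V) : Prop :=
  ∀ t, (σ t).card ≤ b ∧ ∀ v ∈ σ t, v ∉ burnt G F σ t

/-- Final burnt set (the process stabilizes after `|V|` steps). -/
noncomputable def finalBurnt (G : SimpleGraph V) (F : Finset V) (σ : ℕ → Finset V) : Finset V :=
  burnt G F σ (Fintype.card V)

/-- Maximum number of vertices saved in the classic game. -/
noncomputable def MVS (G : SimpleGraph V) (F : Finset V) (b : ℕ) : ℕ :=
  sSup {k | ∃ σ : ℕ → Finset V, ValidClassic G F b σ ∧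
    k = Fintype.card V - (finalBurnt G F σ).card}

/-- Defended set induced by firefighter positions up to time `t`. -/
noncomputable def posDef {b : ℕ} (p : ℕ → Fin b → V) (t : ℕ) : Finset V :=
  (Finset.range (t + 1)).biUnion (fun τ => Finset.univ.image (p τ))

/-- Burnt set at time `t` in the position-based games. -/
noncomputable def pburnt (G : SimpleGraph V) (F : Finset V) {b : ℕ}
    (p : ℕ → Fin b → V) : ℕ → Finset V
  | 0 => F
  | t + 1 => spread G (posDef p t) (pburnt G F p t)

/-- Validity for the distance-restricted game: firefighters never occupy a burnt
vertex and move graph distance at most `d` each turn. -/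
def ValidDR (G : SimpleGraph V) (F : Finset V) (d : ℕ) {b : ℕ} (p : ℕ → Fin b → V) : Prop :=
  (∀ t i, p t i ∉ pburnt G F p t) ∧ ∀ t i, G.dist (p t i) (p (t + 1) i) ≤ d

/-- Distance-restricted maximum vertices saved. -/
noncomputable def DRMVS (G : SimpleGraph V) (F : Finset V) (b d : ℕ) : ℕ :=
  sSup {k | ∃ p : ℕ → Fin b → V, ValidDR G F d p ∧
    k = Fintype.card V - (pburnt G F p (Fintype.card V)).card}

/-- Validity for the path-restricted game with unlimited distance: firefighters
move along walks of unburnt vertices. -/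
def ValidPR (G : SimpleGraph V) (F : Finset V) {b : ℕ} (p : ℕ → Fin b → V) : Prop :=
  (∀ t i, p t i ∉ pburnt G F p t) ∧
    ∀ t i, ∃ w : G.Walk (p t i) (p (t + 1) i),
      ∀ v ∈ w.support, v ∉ pburnt G F p (t + 1)

/-- Path-restricted (unlimited distance) maximum vertices saved. -/
noncomputable def PRMVS (G : SimpleGraph V) (F : Finset V) (b : ℕ) : ℕ :=
  sSup {k | ∃ p : ℕ → Fin b → V, ValidPR G F p ∧
    k = Fintype.card V - (pburnt G F p (Fintype.card V)).card}

/-- Validity for the distance- and path-restricted game. -/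
def ValidDPR (G : SimpleGraph V) (F : Finset V) (d : ℕ) {b : ℕ} (p : ℕ → Fin b → V) : Prop :=
  (∀ t i, p t i ∉ pburnt G F p t) ∧
    ∀ t i, ∃ w : G.Walk (p t i) (p (t + 1) i), w.length ≤ d ∧
      ∀ v ∈ w.support, v ∉ pburnt G F p (t + 1)

/-- Distance- and path-restricted maximum vertices saved. -/
noncomputable def DPRMVS (G : SimpleGraph V) (F : Finset V) (b d : ℕ) : ℕ :=
  sSup {k | ∃ p : ℕ → Fin b → V, ValidDPR G F d p ∧
    k = Fintype.card V - (pburnt G F p (Fintype.card V)).card}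

/-- Burnt count in the single-defence game: the firefighter defends a single
vertex `w ≠ s` and the fire then burns everything reachable from `s` avoiding `w`. -/
noncomputable def sdBurnt (G : SimpleGraph V) (s : V) : ℕ :=
  sInf {k | ∃ w, w ≠ s ∧
    k = (Finset.univ.filter (fun x => ∃ q : G.Walk s x, w ∉ q.support)).card}

end FF

open FF

/-- The number of vertices of the component of `T - u` containing `v`:
the vertices reachable from `v` by a walk avoiding `u`. -/
noncomputable def compSize {V : Type*} [Fintype V] [DecidableEq V]
    (T : SimpleGraph V) (u v : V) : ℕ :=
  (Finset.univ.filter (fun w => ∃ q : T.Walk v w, u ∉ q.support)).card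

/-!
Every vertex other than `u` lies in the component of `T - u` of exactly one neighbour of `u`.
A firefighter can never leave the component of `T - u` in which it starts, since leaving it
would mean crossing the burning vertex `u`; and the fire reaches every vertex of a component
containing no firefighter, along the path from `u`. So the vertices saved lie in the at most
`min b (deg u)` components occupied by firefighters. Conversely, parking the firefighters on
chosen neighbours of `u` from the first turn on saves the whole components of those neighbours.
-/

namespace SimpleGraph

variable {V : Type*} {G : SimpleGraph V} {u v w x y z : V}

/-- `x` and `y` lie in the same component of `G - u`. -/
def ReachableAvoiding (G : SimpleGraph V) (u x y : V) : Prop :=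
  ∃ q : G.Walk x y, u ∉ q.support

namespace ReachableAvoiding

lemma ne_right (h : G.ReachableAvoiding u x y) : y ≠ u := by
  obtain ⟨q, hq⟩ := h
  rintro rfl
  exact hq q.end_mem_support

lemma refl (hx : x ≠ u) : G.ReachableAvoiding u x x :=
  ⟨.nil, by simpa using hx.symm⟩

lemma symm (h : G.ReachableAvoiding u x y) : G.ReachableAvoiding u y x := by
  obtain ⟨q, hq⟩ := h
  exact ⟨q.reverse, by simpa using hq⟩

lemma trans (h : G.ReachableAvoiding u x y) (h' : G.ReachableAvoiding u y z) :
    G.ReachableAvoiding u x z := by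
  obtain ⟨q, hq⟩ := h
  obtain ⟨r, hr⟩ := h'
  refine ⟨q.append r, fun hu => ?_⟩
  rcases List.mem_append.1 (Walk.support_append q r ▸ hu) with hu | hu
  · exact hq hu
  · exact hr (List.mem_of_mem_tail hu)

end ReachableAvoiding

lemma Adj.reachableAvoiding (h : G.Adj x y) (hx : x ≠ u) (hy : y ≠ u) :
    G.ReachableAvoiding u x y :=
  ⟨h.toWalk, by simp [hx.symm, hy.symm]⟩

lemma Preconnected.exists_adj_reachableAvoiding (hG : G.Preconnected) (hx : x ≠ u) :
    ∃ v, G.Adj u v ∧ G.ReachableAvoiding u v x := by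
  obtain ⟨q, hq, -⟩ := (hG u x).exists_path_of_dist
  cases q with
  | nil => exact absurd rfl hx
  | cons h rest =>
    have hnd := hq.support_nodup
    rw [Walk.support_cons, List.nodup_cons] at hnd
    exact ⟨_, h, rest, hnd.1⟩

/-- A walk between two distinct neighbours of `u` avoiding `u` would close a cycle through `u`. -/
lemma IsAcyclic.eq_of_reachableAvoiding (hG : G.IsAcyclic) (hv : G.Adj u v) (hw : G.Adj u w)
    (h : G.ReachableAvoiding u v w) : v = w := by
  by_contra hne
  obtain ⟨q, hq⟩ := h
  have hpath : (Walk.cons hv.symm (Walk.cons hw .nil) : G.Walk v w).IsPath := by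
    simp [Walk.isPath_def, hv.ne', hw.ne, hne]
  have hu : u ∈ (q.toPath : G.Walk v w).support := by
    rw [(hG.subsingleton_path v w).elim q.toPath ⟨_, hpath⟩]
    simp
  exact hq (q.support_toPath_subset_support hu)

variable [Fintype V]

/-- The component of `G - u` containing `v`; empty if `v = u`. Its cardinality is
`compSize G u v` by definition. -/
noncomputable def avoidingComponent (G : SimpleGraph V) (u v : V) : Finset V :=
  univ.filter (G.ReachableAvoiding u v)

@[simp]
lemma mem_avoidingComponent : x ∈ G.avoidingComponent u v ↔ G.ReachableAvoiding u v x := by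
  simp [avoidingComponent]

lemma ReachableAvoiding.avoidingComponent_subset (h : G.ReachableAvoiding u v w) :
    G.avoidingComponent u w ⊆ G.avoidingComponent u v :=
  fun _ hx => mem_avoidingComponent.2 (h.trans (mem_avoidingComponent.1 hx))

lemma IsAcyclic.pairwiseDisjoint_avoidingComponent (hG : G.IsAcyclic) (u : V) :
    (G.neighborSet u).PairwiseDisjoint (G.avoidingComponent u) := by
  intro v hv w hw hvw
  refine Finset.disjoint_left.2 fun x hxv hxw => hvw ?_
  rw [mem_avoidingComponent] at hxv hxw
  exact hG.eq_of_reachableAvoiding hv hw (hxv.trans hxw.symm)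

end SimpleGraph

lemma Finset.exists_fin_image_eq {α : Type*} [DecidableEq α] {s : Finset α} {n : ℕ}
    (hs : s.Nonempty) (hn : s.card ≤ n) : ∃ f : Fin n → α, univ.image f = s := by
  have : Nonempty s := hs.to_subtype
  let e : s ↪ Fin n := s.equivFin.toEmbedding.trans (Fin.castLEEmb hn)
  have hsurj := Function.invFun_surjective (f := ⇑e) e.injective
  refine ⟨fun i => ((Function.invFun (⇑e) i : s) : α), ?_⟩
  ext x
  simp only [mem_image, mem_univ, true_and]
  refine ⟨?_, fun hx => ?_⟩
  · rintro ⟨i, rfl⟩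
    exact Subtype.coe_prop _
  · obtain ⟨i, hi⟩ := hsurj ⟨x, hx⟩
    exact ⟨i, congrArg Subtype.val hi⟩

namespace FF

variable {V : Type*} [DecidableEq V] {u x : V} {b d : ℕ} {p : ℕ → Fin b → V} {t : ℕ}

lemma mem_posDef : x ∈ posDef p t ↔ ∃ τ ≤ t, ∃ i, p τ i = x := by
  simp [posDef]

variable [Fintype V] {G : SimpleGraph V} {F : Finset V}

lemma mem_pburnt_succ : x ∈ pburnt G F p (t + 1) ↔
    x ∈ pburnt G F p t ∨ x ∉ posDef p t ∧ ∃ y ∈ pburnt G F p t, G.Adj y x := by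
  simp [pburnt, spread]

lemma subset_pburnt (G : SimpleGraph V) (F : Finset V) (p : ℕ → Fin b → V) (t : ℕ) :
    F ⊆ pburnt G F p t := by
  induction t with
  | zero => exact subset_rfl
  | succ t ih => exact ih.trans subset_union_left

lemma validDPR_const {f : Fin b → V} (hf : ∀ t i, f i ∉ pburnt G F (fun _ => f) t) :
    ValidDPR G F d (fun _ => f) :=
  ⟨hf, fun t i => ⟨.nil, Nat.zero_le d, by simpa using hf (t + 1) i⟩⟩

/-- The fire can only enter the component of `v ∈ A` through the edge `u v`, and `v` is defended
from the first turn on. -/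
lemma not_reachableAvoiding_of_mem_pburnt (hG : G.IsAcyclic) {A : Finset V}
    (hA : A ⊆ G.neighborFinset u) (hcov : A ⊆ univ.image (p 0)) {v : V} (hv : v ∈ A) :
    ∀ {t x}, x ∈ pburnt G {u} p t → ¬ G.ReachableAvoiding u v x := by
  intro t
  induction t with
  | zero =>
    intro x hx hvx
    exact hvx.ne_right (by simpa [pburnt] using hx)
  | succ t ih =>
    intro x hx hvx
    rcases mem_pburnt_succ.1 hx with hx | ⟨hxdef, y, hy, hyx⟩
    · exact ih hx hvx
    by_cases hyu : y = u
    · subst hyu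
      obtain rfl := hG.eq_of_reachableAvoiding ((G.mem_neighborFinset _ _).1 (hA hv)) hyx hvx
      obtain ⟨i, -, hi⟩ := mem_image.1 (hcov hv)
      exact hxdef (mem_posDef.2 ⟨0, Nat.zero_le t, i, hi⟩)
    · exact ih hy (hvx.trans (hyx.symm.reachableAvoiding hvx.ne_right hyu))

lemma sum_compSize_le_card_compl_pburnt (hG : G.IsAcyclic) {A : Finset V}
    (hA : A ⊆ G.neighborFinset u) (hcov : A ⊆ univ.image (p 0)) (t : ℕ) :
    ∑ v ∈ A, compSize G u v ≤ (pburnt G {u} p t)ᶜ.card := by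
  have hdisj : (A : Set V).PairwiseDisjoint (G.avoidingComponent u) :=
    (hG.pairwiseDisjoint_avoidingComponent u).subset (G.coe_neighborFinset u ▸ coe_subset.2 hA)
  refine (card_biUnion hdisj).symm.trans_le (card_le_card fun x hx => ?_)
  obtain ⟨v, hv, hvx⟩ := mem_biUnion.1 hx
  exact mem_compl.2 fun hxb =>
    not_reachableAvoiding_of_mem_pburnt hG hA hcov hv hxb (mem_avoidingComponent.1 hvx)

lemma bddAbove_saved (G : SimpleGraph V) (F : Finset V) (b d : ℕ) :
    BddAbove {k | ∃ p : ℕ → Fin b → V, ValidDPR G F d p ∧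
      k = Fintype.card V - (pburnt G F p (Fintype.card V)).card} :=
  ⟨Fintype.card V, by rintro k ⟨p, -, rfl⟩; exact Nat.sub_le _ _⟩

lemma sum_compSize_le_DPRMVS (hG : G.IsAcyclic) {A : Finset V} (hA : A ⊆ G.neighborFinset u)
    (hAb : A.card ≤ b) : ∑ v ∈ A, compSize G u v ≤ DPRMVS G {u} b d := by
  rcases A.eq_empty_or_nonempty with rfl | hAne
  · simp
  obtain ⟨f, hf⟩ := exists_fin_image_eq hAne hAb
  have hcov : A ⊆ univ.image ((fun _ => f : ℕ → Fin b → V) 0) := hf.ge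
  have hsafe : ∀ t i, f i ∉ pburnt G {u} (fun _ => f) t := fun t i hfi => by
    have hfA : f i ∈ A := hf ▸ mem_image_of_mem f (mem_univ i)
    have hfu : f i ≠ u := ((G.mem_neighborFinset _ _).1 (hA hfA)).ne'
    exact not_reachableAvoiding_of_mem_pburnt hG hA hcov hfA hfi (.refl hfu)
  refine le_csSup_of_le (bddAbove_saved G {u} b d) ⟨_, validDPR_const hsafe, rfl⟩ ?_
  rw [← card_compl]
  exact sum_compSize_le_card_compl_pburnt hG hA hcov _

lemma ValidDPR.reachableAvoiding (hp : ValidDPR G {u} d p) (t : ℕ) (i : Fin b) :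
    G.ReachableAvoiding u (p 0 i) (p t i) := by
  induction t with
  | zero => exact .refl (by simpa [pburnt] using hp.1 0 i)
  | succ t ih =>
    obtain ⟨w, -, hw⟩ := hp.2 t i
    exact ih.trans ⟨w, fun hu => hw u hu (subset_pburnt G {u} p _ (mem_singleton_self u))⟩

/-- Firefighters never leave their starting component, so every vertex of `w` outside those
components stays undefended and burns one turn after its successor on `w`. -/
lemma ValidDPR.mem_pburnt_of_walk (hp : ValidDPR G {u} d p) (w : G.Walk x u)
    (hx : ∀ i, ¬ G.ReachableAvoiding u (p 0 i) x) :
    ∀ {t}, w.length ≤ t → x ∈ pburnt G {u} p t := by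
  induction w with
  | nil => exact fun _ => subset_pburnt _ _ p _ (mem_singleton_self _)
  | @cons x y u hxy rest ih =>
    intro t ht
    by_cases hxu : x = u
    · exact hxu ▸ subset_pburnt _ _ p _ (mem_singleton_self _)
    obtain ⟨t, rfl⟩ : ∃ s, t = s + 1 := Nat.exists_eq_add_one.2 (by simp at ht; omega)
    have hy : y ∈ pburnt G {u} p t := by
      refine ih hp (fun i hi => ?_) (by simpa using ht)
      exact hx i (hi.trans (hxy.symm.reachableAvoiding hi.ne_right hxu))
    have hxdef : x ∉ posDef p t := by
      rintro hxdef
      obtain ⟨τ, -, i, rfl⟩ := mem_posDef.1 hxdef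
      exact hx i (hp.reachableAvoiding τ i)
    exact mem_pburnt_succ.2 (.inr ⟨hxdef, y, hy, hxy.symm⟩)

lemma ValidDPR.compl_pburnt_subset (hG : G.Preconnected) (hp : ValidDPR G {u} d p) :
    (pburnt G {u} p (Fintype.card V))ᶜ ⊆
      univ.biUnion fun i => G.avoidingComponent u (p 0 i) := by
  intro x hx
  by_contra hxc
  simp only [mem_biUnion, mem_univ, true_and, SimpleGraph.mem_avoidingComponent, not_exists]
    at hxc
  let w := (hG x u).some.toPath
  exact mem_compl.1 hx (hp.mem_pburnt_of_walk w.1 hxc w.2.length_lt.le)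

lemma ValidDPR.card_compl_pburnt_le (hG : G.Preconnected) (hp : ValidDPR G {u} d p) :
    (pburnt G {u} p (Fintype.card V))ᶜ.card ≤
      ((G.neighborFinset u).powersetCard (min b (G.degree u))).sup
        (fun A => ∑ v ∈ A, compSize G u v) := by
  have hstart : ∀ i, p 0 i ≠ u := fun i => by simpa [pburnt] using hp.1 0 i
  choose nbr hadj hreach using fun i => hG.exists_adj_reachableAvoiding (hstart i)
  have hsub : univ.image nbr ⊆ G.neighborFinset u := by
    simpa [subset_iff] using hadj
  have hcard : (univ.image nbr).card ≤ min b (G.degree u) :=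
    le_min (card_image_le.trans_eq (card_fin b)) (card_le_card hsub)
  obtain ⟨A, hnbrA, hA, hAcard⟩ := exists_subsuperset_card_eq hsub hcard (min_le_right _ _)
  calc (pburnt G {u} p (Fintype.card V))ᶜ.card
      ≤ (A.biUnion (G.avoidingComponent u)).card := by
        refine card_le_card ((hp.compl_pburnt_subset hG).trans ?_)
        refine biUnion_subset_iff_forall_subset.2 fun i _ => ?_
        exact (hreach i).avoidingComponent_subset.trans
          (subset_biUnion_of_mem _ (hnbrA (mem_image_of_mem nbr (mem_univ i))))
    _ ≤ ∑ v ∈ A, compSize G u v := card_biUnion_le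
    _ ≤ _ :=
        le_sup (f := fun A => ∑ v ∈ A, compSize G u v) (mem_powersetCard.2 ⟨hA, hAcard⟩)

lemma DPRMVS_le (hG : G.Preconnected) (u : V) (b d : ℕ) :
    DPRMVS G {u} b d ≤
      ((G.neighborFinset u).powersetCard (min b (G.degree u))).sup
        (fun A => ∑ v ∈ A, compSize G u v) := by
  refine csSup_le' ?_
  rintro _ ⟨p, hp, rfl⟩
  rw [← card_compl]
  exact hp.card_compl_pburnt_le hG

end FF

theorem stmt7_general {V : Type*} [Fintype V] [DecidableEq V]
    (T : SimpleGraph V) (hT : T.IsTree) (u : V) (b d : ℕ) :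
    FF.DPRMVS T {u} b d =
      ((T.neighborFinset u).powersetCard (min b (T.degree u))).sup
        (fun A => ∑ v ∈ A, compSize T u v) := by
  refine le_antisymm (DPRMVS_le hT.connected.preconnected u b d) (Finset.sup_le fun A hA => ?_)
  obtain ⟨hsub, hcard⟩ := mem_powersetCard.1 hA
  exact sum_compSize_le_DPRMVS hT.isAcyclic hsub (hcard.trans_le (min_le_left _ _))

theorem stmt7 {V : Type*} [Fintype V] [DecidableEq V]
    (T : SimpleGraph V) (hT : T.IsTree) (u : V) (b d : ℕ) (hb : 1 ≤ b) (hd : 1 ≤ d) :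
    FF.DPRMVS T {u} b d =
      ((T.neighborFinset u).powersetCard (min b (T.degree u))).sup
        (fun A => ∑ v ∈ A, compSize T u v) :=
  stmt7_general T hT u b d
end

section
/- Let $T$ be a caterpillar with spine of length $p > 4$ (spine = vertices of degree $\geq 2$), in which exactly the two spine endpoints have leaf neighbours ($R = 2$), and let $n = |V(T)|$. In the firefighter game where the single firefighter may defend only once, the total number of burnt vertices summed over all $n$ starting positions is at least $2n + p - 6$, so the expected damage is at least $2 + (p-6)/n > 2 - 2/n$. -/
/-!
If the fire starts at `s` and `w` is defended, everything reachable from `s` in `T - w` burns.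
A single defended vertex cuts off at most one neighbour of `s`, so at least `deg s` vertices
burn; and if two disjoint paths `s - a - a'` and `s - b - b'` leave `s`, one of them survives, so
at least three burn. On the caterpillar this gives `ℓ + 1` and `t + 1` at the spine endpoints,
`3` at the spine vertices at distance at least `2` from both endpoints, `2` at the remaining
spine vertices and `1` at the leaves, which add up to `2n + p - 6`.
-/

open SimpleGraph Finset
open scoped Classical

open FF

/-- One-directional edge description of the caterpillar whose spine is the path
`0 - 1 - ⋯ - (p-1)`, with `ℓ` leaves attached to spine endpoint `0`
(vertices `p,…,p+ℓ-1`) and `t` leaves attached to spine endpoint `p-1`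
(vertices `p+ℓ,…,p+ℓ+t-1`). -/
def catLink2 (p ℓ : ℕ) {n : ℕ} (a b : Fin n) : Prop :=
  ((b : ℕ) = (a : ℕ) + 1 ∧ (a : ℕ) + 1 < p) ∨
  ((a : ℕ) = 0 ∧ p ≤ (b : ℕ) ∧ (b : ℕ) < p + ℓ) ∨
  ((a : ℕ) = p - 1 ∧ p + ℓ ≤ (b : ℕ))

/-- The caterpillar with spine of `p` vertices in which only the two spine
endpoints carry leaves (`ℓ` and `t` of them respectively). -/
def catG2 (p ℓ t : ℕ) (hp : 2 ≤ p) : SimpleGraph (Fin (p + ℓ + t)) where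
  Adj a b := catLink2 p ℓ a b ∨ catLink2 p ℓ b a
  symm := ⟨fun a b h => h.symm⟩
  loopless := ⟨by
    intro a h
    rcases h with h | h <;> rcases h with h | h | h <;> omega⟩

namespace FF

variable {V : Type*} [Fintype V] {G : SimpleGraph V} {s w x y : V}

noncomputable def sdBurntSet (G : SimpleGraph V) (s w : V) : Finset V :=
  univ.filter (fun x => ∃ q : G.Walk s x, w ∉ q.support)

theorem le_sdBurnt [Nontrivial V] {k : ℕ} (h : ∀ w, w ≠ s → k ≤ #(sdBurntSet G s w)) :
    k ≤ sdBurnt G s := by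
  obtain ⟨w, hw⟩ := exists_ne s
  refine le_csInf ⟨_, w, hw, rfl⟩ ?_
  rintro _ ⟨w, hw, rfl⟩
  exact h w hw

theorem mem_sdBurntSet_self (hw : w ≠ s) : s ∈ sdBurntSet G s w :=
  mem_filter.2 ⟨mem_univ _, Walk.nil, by simpa using hw⟩

theorem mem_sdBurntSet_of_adj (hx : x ∈ sdBurntSet G s w) (hxy : G.Adj x y) (hy : y ≠ w) :
    y ∈ sdBurntSet G s w := by
  simp only [sdBurntSet, mem_filter, mem_univ, true_and] at hx ⊢
  obtain ⟨q, hq⟩ := hx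
  exact ⟨q.concat hxy, by simp [Walk.support_concat, hq, hy.symm]⟩

theorem one_le_sdBurnt [Nontrivial V] : 1 ≤ sdBurnt G s :=
  le_sdBurnt fun _ hw => card_pos.2 ⟨s, mem_sdBurntSet_self hw⟩

theorem degree_le_sdBurnt : G.degree s ≤ sdBurnt G s := by
  rcases (G.degree s).eq_zero_or_pos with h0 | hpos
  · exact h0 ▸ Nat.zero_le _
  obtain ⟨a, hsa⟩ := (G.degree_pos_iff_exists_adj s).1 hpos
  have : Nontrivial V := ⟨⟨s, a, hsa.ne⟩⟩
  refine le_sdBurnt fun w hw => ?_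
  have hsub : insert s ((G.neighborFinset s).erase w) ⊆ sdBurntSet G s w := by
    intro x hx
    rcases mem_insert.1 hx with rfl | hx
    · exact mem_sdBurntSet_self hw
    · obtain ⟨hxw, hsx⟩ := mem_erase.1 hx
      exact mem_sdBurntSet_of_adj (mem_sdBurntSet_self hw) ((G.mem_neighborFinset _ _).1 hsx) hxw
  have hs : s ∉ (G.neighborFinset s).erase w := by simp
  have herase := pred_card_le_card_erase (s := G.neighborFinset s) (a := w)
  calc G.degree s ≤ #((G.neighborFinset s).erase w) + 1 := by
        rw [← card_neighborFinset_eq_degree]; omega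
    _ = #(insert s ((G.neighborFinset s).erase w)) := (card_insert_of_notMem hs).symm
    _ ≤ #(sdBurntSet G s w) := card_le_card hsub

theorem card_le_sdBurnt_of_subset_neighborFinset {S : Finset V}
    (hS : S ⊆ G.neighborFinset s) : #S ≤ sdBurnt G s :=
  ((card_le_card hS).trans_eq (G.card_neighborFinset_eq_degree s)).trans degree_le_sdBurnt

theorem three_le_card_sdBurntSet {a b : V} (hsa : G.Adj s a) (hab : G.Adj a b) (hsb : s ≠ b)
    (hw : w ≠ s) (hwa : w ≠ a) (hwb : w ≠ b) : 3 ≤ #(sdBurntSet G s w) := by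
  have ha := mem_sdBurntSet_of_adj (mem_sdBurntSet_self hw) hsa hwa.symm
  have hb := mem_sdBurntSet_of_adj ha hab hwb.symm
  calc 3 = #{s, a, b} := by
        rw [card_insert_of_notMem (by simp [hsa.ne, hsb]), card_pair hab.ne]
    _ ≤ #(sdBurntSet G s w) := card_le_card (by
        intro x hx; simp only [mem_insert, mem_singleton] at hx
        rcases hx with rfl | rfl | rfl
        exacts [mem_sdBurntSet_self hw, ha, hb])

theorem three_le_sdBurnt {a a' b b' : V} (hsa : G.Adj s a) (haa' : G.Adj a a')
    (hsb : G.Adj s b) (hbb' : G.Adj b b') (hsa' : s ≠ a') (hsb' : s ≠ b')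
    (hab : a ≠ b) (hab' : a ≠ b') (ha'b : a' ≠ b) (ha'b' : a' ≠ b') : 3 ≤ sdBurnt G s := by
  have : Nontrivial V := ⟨⟨s, a, hsa.ne⟩⟩
  refine le_sdBurnt fun w hw => ?_
  by_cases hwa : w = a ∨ w = a'
  · refine three_le_card_sdBurntSet hsb hbb' hsb' hw ?_ ?_ <;> rintro rfl <;> tauto
  · push Not at hwa
    exact three_le_card_sdBurntSet hsa haa' hsa' hw hwa.1 hwa.2

end FF

section Caterpillar

variable {p ℓ t : ℕ} {hp : 2 ≤ p}

theorem catG2_adj_succ {a b : Fin (p + ℓ + t)} (hab : (b : ℕ) = a + 1)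
    (hb : (b : ℕ) < p) : (catG2 p ℓ t hp).Adj a b :=
  Or.inl (Or.inl ⟨hab, by omega⟩)

theorem catG2_adj_left_leaf {a b : Fin (p + ℓ + t)} (ha : (a : ℕ) = 0)
    (hb : p ≤ (b : ℕ)) (hb' : (b : ℕ) < p + ℓ) : (catG2 p ℓ t hp).Adj a b :=
  Or.inl (Or.inr (Or.inl ⟨ha, hb, hb'⟩))

theorem catG2_adj_right_leaf {a b : Fin (p + ℓ + t)} (ha : (a : ℕ) = p - 1)
    (hb : p + ℓ ≤ (b : ℕ)) : (catG2 p ℓ t hp).Adj a b :=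
  Or.inl (Or.inr (Or.inr ⟨ha, hb⟩))

def catBound (p ℓ t k : ℕ) : ℕ :=
  1 + (if k = 0 then ℓ else 0) + (if k = p - 1 then t else 0) +
    (if k ∈ Ico 1 (p - 1) then 1 else 0) + (if k ∈ Ico 2 (p - 2) then 1 else 0)

theorem sum_catBound (h4 : 4 < p) :
    ∑ s : Fin (p + ℓ + t), catBound p ℓ t s = 2 * (p + ℓ + t) + p - 6 := by
  have hIco : ∀ a b, b ≤ p → range (p + ℓ + t) ∩ Ico a b = Ico a b := fun a b hb =>
    inter_eq_right.2 fun k hk => mem_range.2 (by rw [mem_Ico] at hk; omega)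
  rw [Fin.sum_univ_eq_sum_range (catBound p ℓ t)]
  simp only [catBound, sum_add_distrib, sum_ite_eq', sum_ite_mem, hIco _ _ (Nat.sub_le p 1),
    hIco _ _ (Nat.sub_le p 2), mem_range, sum_const, card_range, Nat.card_Ico, smul_eq_mul]
  split_ifs <;> omega

variable {s : Fin (p + ℓ + t)}

theorem le_sdBurnt_catG2_left_end (hs : (s : ℕ) = 0) :
    ℓ + 1 ≤ sdBurnt (catG2 p ℓ t hp) s := by
  let L := (univ : Finset (Fin ℓ)).map ((Fin.natAddEmb p).trans (Fin.castAddEmb t))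
  have hL : (⟨1, by omega⟩ : Fin (p + ℓ + t)) ∉ L := by
    simp only [L, mem_map, mem_univ, true_and, not_exists, Fin.ext_iff,
      Function.Embedding.trans_apply, Fin.natAddEmb_apply, Fin.coe_castAddEmb, Fin.val_castAdd,
      Fin.val_natAdd]
    omega
  calc ℓ + 1 = #(insert ⟨1, by omega⟩ L) := by
        rw [card_insert_of_notMem hL, card_map, card_univ, Fintype.card_fin]
    _ ≤ _ := card_le_sdBurnt_of_subset_neighborFinset fun x hx => by
        simp only [L, mem_insert, mem_map, mem_univ, true_and] at hx
        rw [mem_neighborFinset]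
        rcases hx with rfl | ⟨i, rfl⟩
        · exact catG2_adj_succ (by dsimp only; omega) (by dsimp only; omega)
        · exact catG2_adj_left_leaf hs (by simp) (by simp)

theorem le_sdBurnt_catG2_right_end (hs : (s : ℕ) = p - 1) :
    t + 1 ≤ sdBurnt (catG2 p ℓ t hp) s := by
  let R := (univ : Finset (Fin t)).map (Fin.natAddEmb (p + ℓ))
  have hR : (⟨p - 2, by omega⟩ : Fin (p + ℓ + t)) ∉ R := by
    simp only [R, mem_map, mem_univ, true_and, not_exists, Fin.ext_iff, Fin.natAddEmb_apply,
      Fin.val_natAdd]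
    omega
  calc t + 1 = #(insert ⟨p - 2, by omega⟩ R) := by
        rw [card_insert_of_notMem hR, card_map, card_univ, Fintype.card_fin]
    _ ≤ _ := card_le_sdBurnt_of_subset_neighborFinset fun x hx => by
        simp only [R, mem_insert, mem_map, mem_univ, true_and] at hx
        rw [mem_neighborFinset]
        rcases hx with rfl | ⟨i, rfl⟩
        · exact (catG2_adj_succ (by dsimp only; omega) (by omega)).symm
        · exact catG2_adj_right_leaf hs (by simp)

theorem two_le_sdBurnt_catG2 (hs₁ : 1 ≤ (s : ℕ)) (hs₂ : (s : ℕ) + 2 ≤ p) :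
    2 ≤ sdBurnt (catG2 p ℓ t hp) s := by
  let a : Fin (p + ℓ + t) := ⟨s - 1, by omega⟩
  let b : Fin (p + ℓ + t) := ⟨s + 1, by omega⟩
  have hab : a ≠ b := by simp only [a, b, ne_eq, Fin.mk.injEq]; omega
  calc 2 = #{a, b} := (card_pair hab).symm
    _ ≤ _ := card_le_sdBurnt_of_subset_neighborFinset fun x hx => by
        simp only [mem_insert, mem_singleton] at hx
        rw [mem_neighborFinset]
        rcases hx with rfl | rfl
        · exact (catG2_adj_succ (by dsimp only [a]; omega) (by omega)).symm
        · exact catG2_adj_succ rfl (by dsimp only [b]; omega)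

theorem three_le_sdBurnt_catG2 (hs₁ : 2 ≤ (s : ℕ)) (hs₂ : (s : ℕ) + 3 ≤ p) :
    3 ≤ sdBurnt (catG2 p ℓ t hp) s := by
  refine three_le_sdBurnt (a := ⟨s - 1, by omega⟩) (a' := ⟨s - 2, by omega⟩)
    (b := ⟨s + 1, by omega⟩) (b' := ⟨s + 2, by omega⟩) ?_ ?_ ?_ ?_ ?_ ?_ ?_ ?_ ?_ ?_
  · exact (catG2_adj_succ (by dsimp only; omega) (by omega)).symm
  · exact (catG2_adj_succ (by dsimp only; omega) (by dsimp only; omega)).symm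
  · exact catG2_adj_succ rfl (by dsimp only; omega)
  · exact catG2_adj_succ rfl (by dsimp only; omega)
  all_goals exact Fin.ne_of_val_ne (by dsimp only; omega)

theorem catBound_eq (h4 : 4 < p) (k : ℕ) :
    catBound p ℓ t k = if k = 0 then ℓ + 1 else if k = p - 1 then t + 1 else if p ≤ k then 1
      else if k = 1 ∨ k = p - 2 then 2 else 3 := by
  simp only [catBound, mem_Ico]
  split_ifs <;> omega

theorem catBound_le_sdBurnt (h4 : 4 < p) (s : Fin (p + ℓ + t)) :
    catBound p ℓ t s ≤ sdBurnt (catG2 p ℓ t hp) s := by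
  have hs := s.isLt
  rw [catBound_eq h4]
  split_ifs with h0 hend hleaf hnear
  · exact le_sdBurnt_catG2_left_end h0
  · exact le_sdBurnt_catG2_right_end hend
  · have : Nontrivial (Fin (p + ℓ + t)) := Fin.nontrivial_iff_two_le.2 (by omega)
    exact one_le_sdBurnt
  · exact two_le_sdBurnt_catG2 (by omega) (by omega)
  · exact three_le_sdBurnt_catG2 (by omega) (by omega)

theorem sum_sdBurnt_catG2_ge (h4 : 4 < p) :
    2 * (p + ℓ + t) + p - 6 ≤ ∑ s : Fin (p + ℓ + t), sdBurnt (catG2 p ℓ t hp) s :=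
  sum_catBound (ℓ := ℓ) (t := t) h4 ▸ sum_le_sum fun s _ => catBound_le_sdBurnt h4 s

end Caterpillar

theorem stmt8 (p ℓ t : ℕ) (hp : 4 < p) :
    (2 * (p + ℓ + t : ℤ) + p - 6 ≤
        ∑ s : Fin (p + ℓ + t), (FF.sdBurnt (catG2 p ℓ t (by omega)) s : ℤ)) ∧
    2 + ((p : ℚ) - 6) / ((p + ℓ + t : ℕ) : ℚ) ≤
      (∑ s : Fin (p + ℓ + t), (FF.sdBurnt (catG2 p ℓ t (by omega)) s : ℚ)) /
        ((p + ℓ + t : ℕ) : ℚ) ∧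
    2 - 2 / ((p + ℓ + t : ℕ) : ℚ) < 2 + ((p : ℚ) - 6) / ((p + ℓ + t : ℕ) : ℚ) := by
  have hZ : 2 * (p + ℓ + t : ℤ) + p - 6 ≤
      ∑ s : Fin (p + ℓ + t), (sdBurnt (catG2 p ℓ t (by omega)) s : ℤ) := by
    have := sum_sdBurnt_catG2_ge (ℓ := ℓ) (t := t) (hp := by omega) hp
    push_cast [← Nat.cast_sum]
    omega
  have hQ : 2 * ((p + ℓ + t : ℕ) : ℚ) + p - 6 ≤
      ∑ s : Fin (p + ℓ + t), (sdBurnt (catG2 p ℓ t (by omega)) s : ℚ) := by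
    exact_mod_cast hZ
  have hn : (0 : ℚ) < ((p + ℓ + t : ℕ) : ℚ) := Nat.cast_pos.2 (by omega)
  have hp' : (4 : ℚ) < p := by exact_mod_cast hp
  refine ⟨hZ, ?_, ?_⟩
  · rw [le_div_iff₀ hn, add_mul, div_mul_cancel₀ _ hn.ne']
    linarith
  · rw [sub_eq_add_neg, ← neg_div]
    gcongr
    linarith
end
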